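/- arXiv:1007.3173 — 2 statements merged into one kernel-verified Lean document; each statement's English description precedes it below -/
import Mathlib

section
/- Let M₁ be a unital complex *-algebra, M₀ ⊆ M₁ a unital *-subalgebra, E : M₁ → M₀ a conditional expectation with E(x*) = E(x)*, and B ⊆ M₁ a Pimsner–Popa basis for M₁ over M₀ relative to E. Let P be a unital complex *-algebra containing M₁ as a unital *-subalgebra, and let p ∈ P be a projection (p = p* = p²) such that (1) p·w·p = E(w)·p for all w ∈ M₁, and (2) the map z ↦ z·p is injective on M₀. Then the map ψ : M₁ ⊗_{M₀} M₁ → P determined by ψ(x ⊗ y) = x·p·y is a well-defined, injective homomorphism of *-algebras and of M₁–M₁-bimodules whose image is M₁pM₁ := span{x·p·y : x, y ∈ M₁}. -/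
open scoped TensorProduct

noncomputable section

variable (M₁ : Type*) [Ring M₁] [Algebra ℂ M₁] [StarRing M₁] [StarModule ℂ M₁]
  (M₀ : StarSubalgebra ℂ M₁)

/-- The subspace of `M₁ ⊗_ℂ M₁` spanned by the balancing relations
`x·z ⊗ y − x ⊗ z·y` for `z ∈ M₀`. -/
def relTensor : Submodule ℂ (M₁ ⊗[ℂ] M₁) :=
  Submodule.span ℂ
    {u | ∃ (x y : M₁) (z : M₀), u = (x * (z : M₁)) ⊗ₜ[ℂ] y - x ⊗ₜ[ℂ] ((z : M₁) * y)}

/-- The balanced tensor product `M₁ ⊗_{M₀} M₁`. -/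
abbrev X2 := (M₁ ⊗[ℂ] M₁) ⧸ relTensor M₁ M₀

/-- The class of the elementary tensor `x ⊗ y` in `M₁ ⊗_{M₀} M₁`. -/
def mk2 (x y : M₁) : X2 M₁ M₀ := Submodule.Quotient.mk (x ⊗ₜ[ℂ] y)

/-!
Every tensor `t ∈ M₁ ⊗_{M₀} M₁` has the Pimsner–Popa expansion `t = Σ_{b ∈ B} b ⊗ c_b(t)`, where
`c_b(x ⊗ y) = E(b* x) y`. The relation `p w p = E(w) p` gives
`p b* ψ(t) w p = E(c_b(t) w) p`, so `ψ(t) = 0` forces `E(c_b(t) w) = 0` for every `w` (as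
`z ↦ z p` is injective on `M₀`), hence `c_b(t) = 0` (expand `c_b(t)*` in the basis), hence `t = 0`.
The algebraic identities for `ψ` only use that `p` commutes with `M₀`, which follows from
`p z p = z p` for `z ∈ M₀` by taking adjoints.
-/

variable {M₁ M₀}

section BalancedTensor

def liftBalanced {N : Type*} [AddCommGroup N] [Module ℂ N] (f : M₁ →ₗ[ℂ] M₁ →ₗ[ℂ] N)
    (hf : ∀ (x y : M₁) (z : M₀), f (x * z) y = f x (z * y)) :
    X2 M₁ M₀ →ₗ[ℂ] N :=
  (relTensor M₁ M₀).liftQ (TensorProduct.lift f) <| by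
    rw [relTensor, Submodule.span_le]
    rintro _ ⟨x, y, z, rfl⟩
    simp only [SetLike.mem_coe, LinearMap.mem_ker, map_sub, TensorProduct.lift.tmul, hf,
      sub_self]

@[simp]
lemma liftBalanced_mk2 {N : Type*} [AddCommGroup N] [Module ℂ N] (f : M₁ →ₗ[ℂ] M₁ →ₗ[ℂ] N)
    (hf : ∀ (x y : M₁) (z : M₀), f (x * z) y = f x (z * y)) (x y : M₁) :
    liftBalanced f hf (mk2 M₁ M₀ x y) = f x y :=
  rfl

def mk2ₗ : M₁ →ₗ[ℂ] M₁ →ₗ[ℂ] X2 M₁ M₀ :=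
  (TensorProduct.mk ℂ M₁ M₁).compr₂ (relTensor M₁ M₀).mkQ

lemma mk2ₗ_apply (x y : M₁) : mk2ₗ x y = mk2 M₁ M₀ x y :=
  rfl

lemma mk2_balanced (x y : M₁) (z : M₀) : mk2 M₁ M₀ (x * z) y = mk2 M₁ M₀ x (z * y) :=
  (Submodule.Quotient.eq _).2 (Submodule.subset_span ⟨x, y, z, rfl⟩)

@[elab_as_elim]
theorem X2.induction_on {C : X2 M₁ M₀ → Prop} (t : X2 M₁ M₀) (zero : C 0)
    (mk2 : ∀ x y, C (mk2 M₁ M₀ x y)) (add : ∀ t u, C t → C u → C (t + u)) : C t := by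
  obtain ⟨u, rfl⟩ := Submodule.Quotient.mk_surjective _ t
  induction u using TensorProduct.induction_on with
  | zero => exact zero
  | tmul x y => exact mk2 x y
  | add u v hu hv => exact add _ _ hu hv

end BalancedTensor

section ConditionalExpectation

variable (M₀) in
structure IsConditionalExpectation (E : M₁ →ₗ[ℂ] M₁) : Prop where
  mem : ∀ x, E x ∈ M₀
  apply_of_mem : ∀ a ∈ M₀, E a = a
  mul_mul : ∀ a ∈ M₀, ∀ b ∈ M₀, ∀ x, E (a * x * b) = a * E x * b

namespace IsConditionalExpectation

variable {E : M₁ →ₗ[ℂ] M₁}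

lemma mul_left (hE : IsConditionalExpectation M₀ E) {a : M₁} (ha : a ∈ M₀) (x : M₁) :
    E (a * x) = a * E x := by
  simpa using hE.mul_mul a ha 1 (one_mem M₀) x

lemma mul_right (hE : IsConditionalExpectation M₀ E) {b : M₁} (hb : b ∈ M₀) (x : M₁) :
    E (x * b) = E x * b := by
  simpa using hE.mul_mul 1 (one_mem M₀) b hb x

def coeff (hE : IsConditionalExpectation M₀ E) (b : M₁) : X2 M₁ M₀ →ₗ[ℂ] M₁ :=
  liftBalanced ((LinearMap.mul ℂ M₁).compl₁₂ (E ∘ₗ LinearMap.mulLeft ℂ (star b)) LinearMap.id)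
    fun x y z => by
      simp only [LinearMap.compl₁₂_apply, LinearMap.comp_apply, LinearMap.mulLeft_apply,
        LinearMap.mul_apply', LinearMap.id_apply, ← mul_assoc, hE.mul_right z.2]

@[simp]
lemma coeff_mk2 (hE : IsConditionalExpectation M₀ E) (b x y : M₁) :
    hE.coeff b (mk2 M₁ M₀ x y) = E (star b * x) * y :=
  rfl

lemma sum_mk2_coeff (hE : IsConditionalExpectation M₀ E) {B : Finset M₁}
    (hB : ∀ x : M₁, x = ∑ b ∈ B, b * E (star b * x)) (t : X2 M₁ M₀) :
    ∑ b ∈ B, mk2 M₁ M₀ b (hE.coeff b t) = t := by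
  induction t using X2.induction_on with
  | zero => simp only [map_zero, ← mk2ₗ_apply, Finset.sum_const_zero]
  | mk2 x y =>
    calc ∑ b ∈ B, mk2 M₁ M₀ b (hE.coeff b (mk2 M₁ M₀ x y))
        = ∑ b ∈ B, mk2ₗ (b * E (star b * x)) y := by
          refine Finset.sum_congr rfl fun b _ => ?_
          rw [coeff_mk2, mk2ₗ_apply, mk2_balanced b y ⟨_, hE.mem _⟩]
      _ = mk2 M₁ M₀ x y := by rw [← LinearMap.sum_apply, ← map_sum, ← hB, mk2ₗ_apply]
  | add t u ht hu =>
    simp only [map_add, ← mk2ₗ_apply, Finset.sum_add_distrib] at ht hu ⊢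
    rw [ht, hu]

end IsConditionalExpectation

lemma eq_zero_of_forall_apply_mul_eq_zero {R A : Type*} [CommSemiring R] [Semiring A]
    [StarRing A] [Module R A] {E : A →ₗ[R] A} (hE_star : ∀ x : A, E (star x) = star (E x))
    {B : Finset A} (hB : ∀ x : A, x = ∑ b ∈ B, b * E (star b * x)) {d : A}
    (hd : ∀ w, E (d * w) = 0) : d = 0 := by
  rw [← star_star d, hB (star d), star_sum]
  refine Finset.sum_eq_zero fun b _ => ?_
  rw [star_mul, ← hE_star, star_mul, star_star, star_star, hd, zero_mul]

end ConditionalExpectation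

section BasicConstruction

variable {E : M₁ →ₗ[ℂ] M₁}
  {P : Type*} [Ring P] [Algebra ℂ P] [StarRing P]

lemma commute_of_proj_mul_mul_proj (hE : IsConditionalExpectation M₀ E) (ι : M₁ →⋆ₐ[ℂ] P)
    {p : P} (hp_star : star p = p) (hpwp : ∀ w : M₁, p * ι w * p = ι (E w) * p)
    {z : M₁} (hz : z ∈ M₀) : Commute (ι z) p := by
  have hfix : ∀ a ∈ M₀, p * ι a * p = ι a * p := fun a ha => by rw [hpwp, hE.apply_of_mem a ha]
  have hstar := congrArg star (hfix (star z) (star_mem hz))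
  simp only [star_mul, star_star, hp_star, map_star, ← mul_assoc] at hstar
  rw [Commute, SemiconjBy, ← hfix z hz, hstar]

def basicEmbedding (ι : M₁ →⋆ₐ[ℂ] P) (p : P) (hp : ∀ z ∈ M₀, Commute (ι z) p) :
    X2 M₁ M₀ →ₗ[ℂ] P :=
  liftBalanced ((LinearMap.mul ℂ P).compl₁₂ (LinearMap.mulRight ℂ p ∘ₗ ι.toLinearMap)
      ι.toLinearMap)
    fun x y z => show ι (x * z) * p * ι y = ι x * p * ι (z * y) by
      rw [map_mul, map_mul, mul_assoc (ι x) (ι z), (hp z z.2).eq]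
      simp only [mul_assoc]

variable (ι : M₁ →⋆ₐ[ℂ] P) {p : P} (hp : ∀ z ∈ M₀, Commute (ι z) p)

@[simp]
lemma basicEmbedding_mk2 (x y : M₁) :
    basicEmbedding ι p hp (mk2 M₁ M₀ x y) = ι x * p * ι y :=
  rfl

lemma basicEmbedding_mk2_mul_mk2 (hE : IsConditionalExpectation M₀ E)
    (hpwp : ∀ w : M₁, p * ι w * p = ι (E w) * p) (x₁ y₁ x₂ y₂ : M₁) :
    basicEmbedding ι p hp (mk2 M₁ M₀ x₁ y₁) * basicEmbedding ι p hp (mk2 M₁ M₀ x₂ y₂) =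
      basicEmbedding ι p hp (mk2 M₁ M₀ x₁ (E (y₁ * x₂) * y₂)) := by
  calc ι x₁ * p * ι y₁ * (ι x₂ * p * ι y₂)
      = ι x₁ * (p * ι (y₁ * x₂) * p) * ι y₂ := by simp only [map_mul, mul_assoc]
    _ = ι x₁ * (ι (E (y₁ * x₂)) * p) * ι y₂ := by rw [hpwp]
    _ = ι x₁ * p * ι (E (y₁ * x₂) * y₂) := by
      rw [(hp _ (hE.mem _)).eq, map_mul ι]
      simp only [mul_assoc]

lemma star_basicEmbedding_mk2 (hp_star : star p = p) (x y : M₁) :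
    star (basicEmbedding ι p hp (mk2 M₁ M₀ x y)) =
      basicEmbedding ι p hp (mk2 M₁ M₀ (star y) (star x)) := by
  simp only [basicEmbedding_mk2, star_mul, hp_star, map_star, mul_assoc]

lemma basicEmbedding_mk2_mul_mul (w w' x y : M₁) :
    basicEmbedding ι p hp (mk2 M₁ M₀ (w * x) (y * w')) =
      ι w * basicEmbedding ι p hp (mk2 M₁ M₀ x y) * ι w' := by
  simp only [basicEmbedding_mk2, map_mul, mul_assoc]

lemma range_basicEmbedding :
    LinearMap.range (basicEmbedding ι p hp) =
      Submodule.span ℂ {q : P | ∃ x y : M₁, q = ι x * p * ι y} := by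
  refine le_antisymm ?_ (Submodule.span_le.2 fun _ ⟨x, y, hq⟩ => ⟨mk2 M₁ M₀ x y, hq.symm⟩)
  rintro _ ⟨t, rfl⟩
  induction t using X2.induction_on with
  | zero => simp only [map_zero, zero_mem]
  | mk2 x y => exact Submodule.subset_span ⟨x, y, rfl⟩
  | add t u ht hu => simpa only [map_add] using add_mem ht hu

lemma proj_mul_basicEmbedding_mul_proj (hE : IsConditionalExpectation M₀ E)
    (hpwp : ∀ w : M₁, p * ι w * p = ι (E w) * p) (b w : M₁) (t : X2 M₁ M₀) :
    p * ι (star b) * basicEmbedding ι p hp t * (ι w * p) = ι (E (hE.coeff b t * w)) * p := by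
  induction t using X2.induction_on with
  | zero => simp only [map_zero, mul_zero, zero_mul]
  | mk2 x y =>
    calc p * ι (star b) * (ι x * p * ι y) * (ι w * p)
        = p * ι (star b * x) * (p * ι (y * w) * p) := by simp only [map_mul, mul_assoc]
      _ = p * ι (star b * x * E (y * w)) * p := by
        rw [hpwp (y * w), map_mul ι (star b * x)]
        simp only [mul_assoc]
      _ = ι (E (E (star b * x) * y * w)) * p := by
        rw [hpwp, hE.mul_right (hE.mem _), mul_assoc, hE.mul_left (hE.mem _)]
  | add t u ht hu => simp only [map_add, add_mul, mul_add, ht, hu]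

lemma basicEmbedding_injective (hE : IsConditionalExpectation M₀ E)
    (hE_star : ∀ x : M₁, E (star x) = star (E x)) {B : Finset M₁}
    (hB : ∀ x : M₁, x = ∑ b ∈ B, b * E (star b * x))
    (hpwp : ∀ w : M₁, p * ι w * p = ι (E w) * p)
    (hinj : ∀ z w : M₀, ι (z : M₁) * p = ι (w : M₁) * p → z = w) :
    Function.Injective (basicEmbedding ι p hp) := by
  refine (injective_iff_map_eq_zero _).2 fun t ht => ?_
  have hcoeff : ∀ b, hE.coeff b t = 0 := fun b =>
    eq_zero_of_forall_apply_mul_eq_zero hE_star hB fun w => by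
      have h := proj_mul_basicEmbedding_mul_proj ι hp hE hpwp b w t
      rw [ht, mul_zero, zero_mul] at h
      have h0 := hinj ⟨_, hE.mem (hE.coeff b t * w)⟩ 0 (by simpa using h.symm)
      simpa using congrArg Subtype.val h0
  rw [← hE.sum_mk2_coeff hB t]
  simp only [hcoeff, ← mk2ₗ_apply, map_zero, Finset.sum_const_zero]

end BasicConstruction

variable (M₁ M₀)

theorem basic_construction_embedding
    (E : M₁ →ₗ[ℂ] M₁)
    (hE_mem : ∀ x : M₁, E x ∈ M₀)
    (hE_fix : ∀ a ∈ M₀, E a = a)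
    (hE_bimod : ∀ a ∈ M₀, ∀ b ∈ M₀, ∀ x : M₁, E (a * x * b) = a * E x * b)
    (hE_star : ∀ x : M₁, E (star x) = star (E x))
    (B : Finset M₁) (hB : ∀ x : M₁, x = ∑ b ∈ B, b * E (star b * x))
    (P : Type*) [Ring P] [Algebra ℂ P] [StarRing P] [StarModule ℂ P]
    (ι : M₁ →⋆ₐ[ℂ] P)
    (p : P) (hp_star : star p = p)
    (hpwp : ∀ w : M₁, p * ι w * p = ι (E w) * p)
    (hinj : ∀ z w : M₀, ι (z : M₁) * p = ι (w : M₁) * p → z = w) :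
    ∃ ψ : X2 M₁ M₀ →ₗ[ℂ] P,
      (∀ x y : M₁, ψ (mk2 M₁ M₀ x y) = ι x * p * ι y) ∧
      Function.Injective ψ ∧
      (∀ x₁ y₁ x₂ y₂ : M₁,
        ψ (mk2 M₁ M₀ x₁ y₁) * ψ (mk2 M₁ M₀ x₂ y₂) = ψ (mk2 M₁ M₀ x₁ (E (y₁ * x₂) * y₂))) ∧
      (∀ x y : M₁, star (ψ (mk2 M₁ M₀ x y)) = ψ (mk2 M₁ M₀ (star y) (star x))) ∧
      (∀ w w' x y : M₁,
        ψ (mk2 M₁ M₀ (w * x) (y * w')) = ι w * ψ (mk2 M₁ M₀ x y) * ι w') ∧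
      LinearMap.range ψ = Submodule.span ℂ {q : P | ∃ x y : M₁, q = ι x * p * ι y} := by
  have hE : IsConditionalExpectation M₀ E := ⟨hE_mem, hE_fix, hE_bimod⟩
  have hp : ∀ z ∈ M₀, Commute (ι z) p := fun _ =>
    commute_of_proj_mul_mul_proj hE ι hp_star hpwp
  exact ⟨basicEmbedding ι p hp, basicEmbedding_mk2 ι hp,
    basicEmbedding_injective ι hp hE hE_star hB hpwp hinj,
    basicEmbedding_mk2_mul_mk2 ι hp hE hpwp, star_basicEmbedding_mk2 ι hp hp_star,
    basicEmbedding_mk2_mul_mul ι hp, range_basicEmbedding ι hp⟩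
end
end

section
/- Let M₁ be a unital complex *-algebra, M₀ ⊆ M₁ a unital *-subalgebra, tr a faithful trace on M₁, E : M₁ → M₀ the trace-preserving conditional expectation, and B a Pimsner–Popa basis for M₁ over M₀ with Σ_{b∈B} b·b* = d²·1 for some real d > 0. Let P be a unital complex *-algebra containing M₁ as a unital *-subalgebra and p ∈ P a projection with p·w·p = E(w)·p for all w ∈ M₁, with z ↦ z·p injective on M₀, and with P = span{x·p·y : x, y ∈ M₁}. Suppose tr_P is a faithful trace on P extending tr with tr_P(x·p·y) = d⁻²·tr(x·y) for all x, y ∈ M₁. Then: (a) Σ_{b∈B} b·p·b* = 1; (b) the linear map E₁ : P → M₁ determined by E₁(x·p·y) = d⁻²·x·y (for x, y ∈ M₁) is well defined and is a trace-preserving conditional expectation onto M₁; (c) the set {d·b·p : b ∈ B} is a Pimsner–Popa basis for P over M₁ relative to E₁, and Σ_{b∈B} (d·b·p)(d·b·p)* = d²·1, so the Watatani index of M₁ ⊆ P equals the Watatani index d² of M₀ ⊆ M₁. -/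
open scoped ComplexOrder

/-!
The Jones projection compresses `M₁` onto `M₀`: `p w p = E(w) p`. Applied to `z` and `z*` for
`z ∈ M₀` this makes `p` commute with `M₀`, and it turns the Pimsner–Popa expansion
`x = ∑ b E(b* x)` into `(∑ b p b*) x p = x p`, so `∑ b p b*` acts as the identity on the
generators `x p y` of `P`, which gives (a).

`E₁` is well defined by trace duality: `m ↦ tr(m ·)` is injective because `tr` is faithful, and
on generators `tr_P(q w) = tr(E₁(q) w)` for all `w ∈ M₁`. All properties of `E₁` in (b) and (c)
are then identities that only need checking on the generators `x p y`.
-/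

theorem LinearMap.injective_compr₂_mul_of_faithful {R A : Type*} [CommRing R] [Ring A]
    [Algebra R A] [StarAddMonoid A] (τ : A →ₗ[R] R)
    (hτ : ∀ x : A, x ≠ 0 → τ (star x * x) ≠ 0) :
    Function.Injective ((LinearMap.mul R A).compr₂ τ) := by
  refine (injective_iff_map_eq_zero _).2 fun m hm => ?_
  by_contra hm0
  refine hτ (star m) (star_ne_zero.2 hm0) ?_
  simpa using LinearMap.congr_fun hm (star m)

theorem LinearMap.exists_apply_eq_of_injective {R M N P X : Type*} [Semiring R]
    [AddCommMonoid M] [AddCommMonoid N] [AddCommMonoid P] [Module R M] [Module R N] [Module R P]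
    (φ : M →ₗ[R] N) (hφ : Function.Injective φ) (Ψ : P →ₗ[R] N) {g : X → P}
    (hg : Submodule.span R (Set.range g) = ⊤) (f : X → M) (hfg : ∀ i, Ψ (g i) = φ (f i)) :
    ∃ F : P →ₗ[R] M, ∀ i, F (g i) = f i := by
  have hle : LinearMap.range Ψ ≤ LinearMap.range φ := by
    rw [LinearMap.range_eq_map, ← hg, Submodule.map_span_le]
    rintro _ ⟨i, rfl⟩
    exact ⟨f i, (hfg i).symm⟩
  refine ⟨(LinearEquiv.ofInjective φ hφ).symm.toLinearMap ∘ₗ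
    Ψ.codRestrict _ fun q => hle ⟨q, rfl⟩, fun i => hφ ?_⟩
  simp [hfg]

theorem commute_of_proj_mul_mul_eq {R : Type*} [Semigroup R] [StarMul R] {p a : R}
    (hp : star p = p) (h : p * a * p = a * p) (h' : p * star a * p = star a * p) :
    Commute a p := by
  have h'' : p * a * p = p * a := by simpa [mul_assoc, hp] using congrArg star h'
  exact h.symm.trans h''

section BasicConstruction

variable {M₁ P : Type*} [Ring M₁] [Algebra ℂ M₁] [StarRing M₁] [Ring P] [Algebra ℂ P]
  [StarRing P] {ι : M₁ →⋆ₐ[ℂ] P} {p : P} {E : M₁ →ₗ[ℂ] M₁} {B : Finset M₁}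

variable (ι p) in
def mulProjMul : Set P := {q | ∃ x y : M₁, q = ι x * p * ι y}

theorem linearMap_ext_of_span_mulProjMul (hspan : Submodule.span ℂ (mulProjMul ι p) = ⊤)
    {V : Type*} [AddCommMonoid V] [Module ℂ V] {f g : P →ₗ[ℂ] V}
    (h : ∀ x y : M₁, f (ι x * p * ι y) = g (ι x * p * ι y)) : f = g :=
  LinearMap.ext_on hspan fun _ ⟨x, y, hq⟩ => hq ▸ h x y

theorem commute_proj_of_expectation_eq (hp : star p = p)
    (hpwp : ∀ w : M₁, p * ι w * p = ι (E w) * p) {z : M₁} (hz : E z = z)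
    (hz' : E (star z) = star z) : Commute (ι z) p :=
  commute_of_proj_mul_mul_eq hp (by rw [hpwp, hz]) (by rw [← map_star, hpwp, hz'])

theorem sum_mul_proj_mul_star_mul (hpwp : ∀ w : M₁, p * ι w * p = ι (E w) * p)
    (hB : ∀ x : M₁, x = ∑ b ∈ B, b * E (star b * x)) (x : M₁) :
    (∑ b ∈ B, ι b * p * ι (star b)) * (ι x * p) = ι x * p :=
  calc (∑ b ∈ B, ι b * p * ι (star b)) * (ι x * p)
      = ∑ b ∈ B, ι (b * E (star b * x)) * p := by
        rw [Finset.sum_mul]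
        refine Finset.sum_congr rfl fun b _ => ?_
        rw [map_mul, mul_assoc (ι b) (ι (E _)), ← hpwp, map_mul]
        noncomm_ring
    _ = ι x * p := by rw [← Finset.sum_mul, ← map_sum, ← hB x]

theorem sum_mul_proj_mul_star_eq_one (hpwp : ∀ w : M₁, p * ι w * p = ι (E w) * p)
    (hB : ∀ x : M₁, x = ∑ b ∈ B, b * E (star b * x))
    (hspan : Submodule.span ℂ (mulProjMul ι p) = ⊤) :
    ∑ b ∈ B, ι b * p * ι (star b) = 1 := by
  have h : LinearMap.mulLeft ℂ (∑ b ∈ B, ι b * p * ι (star b)) = LinearMap.id := by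
    refine linearMap_ext_of_span_mulProjMul hspan fun x y => ?_
    rw [LinearMap.mulLeft_apply, LinearMap.id_apply, ← mul_assoc,
      sum_mul_proj_mul_star_mul hpwp hB]
  simpa using LinearMap.congr_fun h 1

theorem exists_linearMap_apply_mul_proj_mul (tr : M₁ →ₗ[ℂ] ℂ)
    (htr : ∀ x : M₁, x ≠ 0 → tr (star x * x) ≠ 0) (trP : P →ₗ[ℂ] ℂ) (c : ℂ)
    (htrP : ∀ x y : M₁, trP (ι x * p * ι y) = c * tr (x * y))
    (hspan : Submodule.span ℂ (mulProjMul ι p) = ⊤) :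
    ∃ F : P →ₗ[ℂ] M₁, ∀ x y : M₁, F (ι x * p * ι y) = c • (x * y) := by
  have hrange : Set.range (fun xy : M₁ × M₁ => ι xy.1 * p * ι xy.2) = mulProjMul ι p := by
    ext q
    simp [mulProjMul, eq_comm]
  obtain ⟨F, hF⟩ := LinearMap.exists_apply_eq_of_injective _
    (LinearMap.injective_compr₂_mul_of_faithful tr htr)
    (((LinearMap.mul ℂ P).compr₂ trP).compl₂ (ι : M₁ →ₗ[ℂ] P)) (by rw [hrange]; exact hspan)
    (fun xy : M₁ × M₁ => c • (xy.1 * xy.2)) fun ⟨x, y⟩ => by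
      ext w
      show trP (ι x * p * ι y * ι w) = tr (c • (x * y) * w)
      rw [mul_assoc _ (ι y), ← map_mul, htrP, smul_mul_assoc, map_smul, smul_eq_mul, mul_assoc]
  exact ⟨F, fun x y => hF (x, y)⟩

theorem map_eq_self_of_apply_mul_proj_mul {E₁ : P →ₗ[ℂ] P} {δ : ℂ} (hδ : δ ≠ 0)
    (hE₁ : ∀ x y : M₁, E₁ (ι x * p * ι y) = δ⁻¹ • ι (x * y))
    (hA : ∑ b ∈ B, ι b * p * ι (star b) = 1) (hBsum : ∑ b ∈ B, b * star b = δ • (1 : M₁))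
    (x : M₁) : E₁ (ι x) = ι x :=
  calc E₁ (ι x) = E₁ (∑ b ∈ B, ι b * p * ι (star b * x)) := by
        simp only [map_mul, ← mul_assoc, ← Finset.sum_mul, hA, one_mul]
    _ = ∑ b ∈ B, δ⁻¹ • ι (b * (star b * x)) := by
        rw [map_sum]
        exact Finset.sum_congr rfl fun b _ => hE₁ _ _
    _ = δ⁻¹ • ι ((∑ b ∈ B, b * star b) * x) := by
        simp only [← Finset.smul_sum, ← map_sum, Finset.sum_mul, mul_assoc]
    _ = ι x := by rw [hBsum, smul_mul_assoc, one_mul, map_smul, smul_smul, inv_mul_cancel₀ hδ,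
        one_smul]

theorem map_mul_left_of_apply_mul_proj_mul
    (hspan : Submodule.span ℂ (mulProjMul ι p) = ⊤)
    {E₁ : P →ₗ[ℂ] P} {c : ℂ} (hE₁ : ∀ x y : M₁, E₁ (ι x * p * ι y) = c • ι (x * y))
    (a : M₁) (q : P) : E₁ (ι a * q) = ι a * E₁ q := by
  have h : E₁ ∘ₗ LinearMap.mulLeft ℂ (ι a) = LinearMap.mulLeft ℂ (ι a) ∘ₗ E₁ := by
    refine linearMap_ext_of_span_mulProjMul hspan fun x y => ?_
    rw [LinearMap.comp_apply, LinearMap.mulLeft_apply, LinearMap.comp_apply,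
      LinearMap.mulLeft_apply, ← mul_assoc (ι a) (ι x * p), ← mul_assoc (ι a) (ι x), ← map_mul,
      hE₁, hE₁, mul_smul_comm, ← map_mul, mul_assoc]
  exact LinearMap.congr_fun h q

theorem map_mul_right_of_apply_mul_proj_mul
    (hspan : Submodule.span ℂ (mulProjMul ι p) = ⊤)
    {E₁ : P →ₗ[ℂ] P} {c : ℂ} (hE₁ : ∀ x y : M₁, E₁ (ι x * p * ι y) = c • ι (x * y))
    (a : M₁) (q : P) : E₁ (q * ι a) = E₁ q * ι a := by
  have h : E₁ ∘ₗ LinearMap.mulRight ℂ (ι a) = LinearMap.mulRight ℂ (ι a) ∘ₗ E₁ := by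
    refine linearMap_ext_of_span_mulProjMul hspan fun x y => ?_
    rw [LinearMap.comp_apply, LinearMap.mulRight_apply, LinearMap.comp_apply,
      LinearMap.mulRight_apply, mul_assoc _ (ι y), ← map_mul, hE₁, hE₁, smul_mul_assoc,
      ← map_mul, mul_assoc]
  exact LinearMap.congr_fun h q

theorem map_star_of_apply_mul_proj_mul [StarModule ℂ P] (hp : star p = p)
    (hspan : Submodule.span ℂ (mulProjMul ι p) = ⊤)
    {E₁ : P →ₗ[ℂ] P} {c : ℝ} (hE₁ : ∀ x y : M₁, E₁ (ι x * p * ι y) = (c : ℂ) • ι (x * y))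
    (q : P) : E₁ (star q) = star (E₁ q) := by
  have hq : q ∈ Submodule.span ℂ (mulProjMul ι p) := hspan ▸ trivial
  induction hq using Submodule.span_induction with
  | mem _ h =>
    obtain ⟨x, y, rfl⟩ := h
    have hstar : star (ι x * p * ι y) = ι (star y) * p * ι (star x) := by
      simp only [star_mul, hp, ← map_star, mul_assoc]
    rw [hstar, hE₁, hE₁, star_smul, Complex.star_def, Complex.conj_ofReal, ← map_star, star_mul]
  | zero => simp
  | add q r _ _ hq hr => rw [star_add, map_add, hq, hr, map_add, star_add]
  | smul a q _ hq => rw [star_smul, map_smul, hq, map_smul, star_smul]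

theorem trace_map_of_apply_mul_proj_mul
    (hspan : Submodule.span ℂ (mulProjMul ι p) = ⊤)
    {E₁ : P →ₗ[ℂ] P} {c : ℂ} (hE₁ : ∀ x y : M₁, E₁ (ι x * p * ι y) = c • ι (x * y))
    (tr : M₁ →ₗ[ℂ] ℂ) (trP : P →ₗ[ℂ] ℂ) (htrP_ext : ∀ x : M₁, trP (ι x) = tr x)
    (htrP_p : ∀ x y : M₁, trP (ι x * p * ι y) = c * tr (x * y)) (q : P) :
    trP (E₁ q) = trP q := by
  have h : trP ∘ₗ E₁ = trP := by
    refine linearMap_ext_of_span_mulProjMul hspan fun x y => ?_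
    rw [LinearMap.comp_apply, hE₁, map_smul, htrP_ext, htrP_p, smul_eq_mul]
  exact LinearMap.congr_fun h q

theorem star_smul_mul_proj [StarModule ℂ P] (hp : star p = p) (d : ℝ) (b : M₁) :
    star ((d : ℂ) • (ι b * p)) = (d : ℂ) • (p * ι (star b)) := by
  rw [star_smul, star_mul, hp, ← map_star, Complex.star_def, Complex.conj_ofReal]

theorem sum_smul_mul_proj_mul_map_star_mul [StarModule ℂ P] (hp : star p = p)
    (hpwp : ∀ w : M₁, p * ι w * p = ι (E w) * p) (hcomm : ∀ w : M₁, Commute (ι (E w)) p)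
    (hB : ∀ x : M₁, x = ∑ b ∈ B, b * E (star b * x))
    (hspan : Submodule.span ℂ (mulProjMul ι p) = ⊤)
    {d : ℝ} (hd : d ≠ 0) {E₁ : P →ₗ[ℂ] P}
    (hE₁ : ∀ x y : M₁, E₁ (ι x * p * ι y) = ((d : ℂ) ^ 2)⁻¹ • ι (x * y)) (q : P) :
    ∑ b ∈ B, ((d : ℂ) • (ι b * p)) * E₁ (star ((d : ℂ) • (ι b * p)) * q) = q := by
  have hterm : ∀ (b x y : M₁), ((d : ℂ) • (ι b * p)) *
      E₁ (star ((d : ℂ) • (ι b * p)) * (ι x * p * ι y)) = ι (b * E (star b * x)) * p * ι y := by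
    intro b x y
    have hcompress : p * ι (star b) * (ι x * p * ι y) = ι (E (star b * x)) * p * ι y := by
      rw [← hpwp, map_mul]
      noncomm_ring
    have hd2 : (d : ℂ) * (((d : ℂ) ^ 2)⁻¹ * (d : ℂ)) = 1 := by
      field_simp
    calc ((d : ℂ) • (ι b * p)) * E₁ (star ((d : ℂ) • (ι b * p)) * (ι x * p * ι y))
        = ((d : ℂ) * (((d : ℂ) ^ 2)⁻¹ * (d : ℂ))) • (ι b * p * ι (E (star b * x) * y)) := by
          rw [star_smul_mul_proj hp, smul_mul_assoc _ (p * ι (star b)), map_smul, hcompress,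
            hE₁, smul_smul, mul_smul_comm, smul_mul_assoc, smul_smul, mul_assoc]
      _ = ι b * (p * ι (E (star b * x))) * ι y := by
          rw [hd2, one_smul, map_mul]
          noncomm_ring
      _ = ι (b * E (star b * x)) * p * ι y := by
          rw [← (hcomm _).eq, map_mul ι]
          simp only [mul_assoc]
  have h : ∑ b ∈ B, LinearMap.mulLeft ℂ ((d : ℂ) • (ι b * p)) ∘ₗ E₁ ∘ₗ
      LinearMap.mulLeft ℂ (star ((d : ℂ) • (ι b * p))) = LinearMap.id := by
    refine linearMap_ext_of_span_mulProjMul hspan fun x y => ?_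
    simp only [LinearMap.sum_apply, LinearMap.comp_apply,
      LinearMap.mulLeft_apply, LinearMap.id_apply, hterm, ← Finset.sum_mul, ← map_sum, ← hB x]
  simpa using LinearMap.congr_fun h q

theorem sum_smul_mul_proj_mul_star [StarModule ℂ P] (hp : star p = p) (hp_idem : p * p = p)
    (hA : ∑ b ∈ B, ι b * p * ι (star b) = 1) (d : ℝ) :
    ∑ b ∈ B, ((d : ℂ) • (ι b * p)) * star ((d : ℂ) • (ι b * p)) = ((d : ℂ) ^ 2) • (1 : P) := by
  simp only [star_smul_mul_proj hp, smul_mul_smul_comm, ← pow_two, ← Finset.smul_sum, ← hA]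
  congr 1
  refine Finset.sum_congr rfl fun b _ => ?_
  rw [mul_assoc (ι b), ← mul_assoc p, hp_idem, mul_assoc]

end BasicConstruction

theorem basic_construction_strongly_Markov_general
    (M₁ : Type*) [Ring M₁] [Algebra ℂ M₁] [StarRing M₁] [StarModule ℂ M₁]
    (M₀ : StarSubalgebra ℂ M₁)
    (tr : M₁ →ₗ[ℂ] ℂ)
    (htr_faithful : ∀ x : M₁, x ≠ 0 → 0 < tr (star x * x))
    (E : M₁ →ₗ[ℂ] M₁)
    (hE_mem : ∀ x : M₁, E x ∈ M₀)
    (hE_fix : ∀ a ∈ M₀, E a = a)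
    (B : Finset M₁) (hB : ∀ x : M₁, x = ∑ b ∈ B, b * E (star b * x))
    (d : ℝ) (hd : 0 < d)
    (hBsum : ∑ b ∈ B, b * star b = ((d : ℂ) ^ 2) • (1 : M₁))
    (P : Type*) [Ring P] [Algebra ℂ P] [StarRing P] [StarModule ℂ P]
    (ι : M₁ →⋆ₐ[ℂ] P)
    (p : P) (hp_star : star p = p) (hp_idem : p * p = p)
    (hpwp : ∀ w : M₁, p * ι w * p = ι (E w) * p)
    (hspan : Submodule.span ℂ {q : P | ∃ x y : M₁, q = ι x * p * ι y} = ⊤)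
    (trP : P →ₗ[ℂ] ℂ)
    (htrP_ext : ∀ x : M₁, trP (ι x) = tr x)
    (htrP_p : ∀ x y : M₁, trP (ι x * p * ι y) = (((d : ℂ) ^ 2)⁻¹) * tr (x * y)) :
    -- (a)
    (∑ b ∈ B, ι b * p * ι (star b) = 1) ∧
    -- (b) and (c)
    ∃ E₁ : P →ₗ[ℂ] P,
      (∀ x y : M₁, E₁ (ι x * p * ι y) = (((d : ℂ) ^ 2)⁻¹) • ι (x * y)) ∧
      (∀ q : P, ∃ m : M₁, E₁ q = ι m) ∧
      (∀ x : M₁, E₁ (ι x) = ι x) ∧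
      (∀ (a : M₁) (q : P), E₁ (ι a * q) = ι a * E₁ q ∧ E₁ (q * ι a) = E₁ q * ι a) ∧
      (∀ q : P, E₁ (star q) = star (E₁ q)) ∧
      (∀ q : P, trP (E₁ q) = trP q) ∧
      -- (c): {d·b·p} is a Pimsner–Popa basis for P over M₁ relative to E₁ ...
      (∀ q : P, q = ∑ b ∈ B, ((d : ℂ) • (ι b * p)) * E₁ (star ((d : ℂ) • (ι b * p)) * q)) ∧
      -- ... with Watatani index d²
      (∑ b ∈ B, ((d : ℂ) • (ι b * p)) * star ((d : ℂ) • (ι b * p)) = ((d : ℂ) ^ 2) • (1 : P)) := by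
  have hd0 : d ≠ 0 := hd.ne'
  have hA := sum_mul_proj_mul_star_eq_one hpwp hB hspan
  obtain ⟨F, hF⟩ := exists_linearMap_apply_mul_proj_mul tr (fun x hx => (htr_faithful x hx).ne')
    trP _ htrP_p hspan
  set E₁ : P →ₗ[ℂ] P := (ι : M₁ →ₗ[ℂ] P) ∘ₗ F
  have hE₁ : ∀ x y : M₁, E₁ (ι x * p * ι y) = ((d : ℂ) ^ 2)⁻¹ • ι (x * y) := fun x y => by
    simp [E₁, hF]
  have hcomm : ∀ w : M₁, Commute (ι (E w)) p := fun w =>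
    commute_proj_of_expectation_eq hp_star hpwp (hE_fix _ (hE_mem w))
      (hE_fix _ (star_mem (hE_mem w)))
  refine ⟨hA, E₁, hE₁, fun q => ⟨F q, rfl⟩,
    map_eq_self_of_apply_mul_proj_mul (pow_ne_zero 2 (by exact_mod_cast hd0)) hE₁ hA hBsum,
    fun a q => ⟨map_mul_left_of_apply_mul_proj_mul hspan hE₁ a q,
      map_mul_right_of_apply_mul_proj_mul hspan hE₁ a q⟩,
    map_star_of_apply_mul_proj_mul hp_star hspan (c := (d ^ 2)⁻¹) (by simpa using hE₁),
    trace_map_of_apply_mul_proj_mul hspan hE₁ tr trP htrP_ext htrP_p,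
    fun q => (sum_smul_mul_proj_mul_map_star_mul hp_star hpwp hcomm hB hspan hd0 hE₁ q).symm,
    sum_smul_mul_proj_mul_star hp_star hp_idem hA d⟩

/-- Let `M₀ ⊆ M₁` with faithful trace `tr`, trace-preserving conditional
expectation `E`, and Pimsner–Popa basis `B` with `∑ b b* = d²·1` (`d > 0`).  Let `P ⊇ M₁`
(inclusion `ι`) with a projection `p` implementing `E`, `z ↦ z·p` injective on `M₀`,
`P = span{x·p·y}`, and a faithful trace `tr_P` extending `tr` with
`tr_P(x p y) = d⁻² tr(xy)`.  Then:
(a) `∑_{b∈B} b p b* = 1`;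
(b) there is a well-defined trace-preserving conditional expectation `E₁ : P → M₁` with
    `E₁(x p y) = d⁻² x y`;
(c) `{d·b·p : b ∈ B}` is a Pimsner–Popa basis for `P` over `M₁` relative to `E₁`, and
    `∑_{b∈B} (d b p)(d b p)* = d²·1`, i.e. the Watatani index of `M₁ ⊆ P` equals the
    Watatani index `d²` of `M₀ ⊆ M₁`. -/
theorem basic_construction_strongly_Markov
    (M₁ : Type*) [Ring M₁] [Algebra ℂ M₁] [StarRing M₁] [StarModule ℂ M₁]
    (M₀ : StarSubalgebra ℂ M₁)
    (tr : M₁ →ₗ[ℂ] ℂ)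
    (htr_one : tr 1 = 1)
    (htr_comm : ∀ x y : M₁, tr (x * y) = tr (y * x))
    (htr_faithful : ∀ x : M₁, x ≠ 0 → 0 < tr (star x * x))
    (E : M₁ →ₗ[ℂ] M₁)
    (hE_mem : ∀ x : M₁, E x ∈ M₀)
    (hE_fix : ∀ a ∈ M₀, E a = a)
    (hE_bimod : ∀ a ∈ M₀, ∀ b ∈ M₀, ∀ x : M₁, E (a * x * b) = a * E x * b)
    (hE_star : ∀ x : M₁, E (star x) = star (E x))
    (hE_tr : ∀ x : M₁, tr (E x) = tr x)
    (B : Finset M₁) (hB : ∀ x : M₁, x = ∑ b ∈ B, b * E (star b * x))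
    (d : ℝ) (hd : 0 < d)
    (hBsum : ∑ b ∈ B, b * star b = ((d : ℂ) ^ 2) • (1 : M₁))
    (P : Type*) [Ring P] [Algebra ℂ P] [StarRing P] [StarModule ℂ P]
    (ι : M₁ →⋆ₐ[ℂ] P) (hι : Function.Injective ι)
    (p : P) (hp_star : star p = p) (hp_idem : p * p = p)
    (hpwp : ∀ w : M₁, p * ι w * p = ι (E w) * p)
    (hinj : ∀ z w : M₀, ι (z : M₁) * p = ι (w : M₁) * p → z = w)
    (hspan : Submodule.span ℂ {q : P | ∃ x y : M₁, q = ι x * p * ι y} = ⊤)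
    (trP : P →ₗ[ℂ] ℂ)
    (htrP_one : trP 1 = 1)
    (htrP_comm : ∀ q r : P, trP (q * r) = trP (r * q))
    (htrP_faithful : ∀ q : P, q ≠ 0 → 0 < trP (star q * q))
    (htrP_ext : ∀ x : M₁, trP (ι x) = tr x)
    (htrP_p : ∀ x y : M₁, trP (ι x * p * ι y) = (((d : ℂ) ^ 2)⁻¹) * tr (x * y)) :
    -- (a)
    (∑ b ∈ B, ι b * p * ι (star b) = 1) ∧
    -- (b) and (c)
    ∃ E₁ : P →ₗ[ℂ] P,
      (∀ x y : M₁, E₁ (ι x * p * ι y) = (((d : ℂ) ^ 2)⁻¹) • ι (x * y)) ∧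
      (∀ q : P, ∃ m : M₁, E₁ q = ι m) ∧
      (∀ x : M₁, E₁ (ι x) = ι x) ∧
      (∀ (a : M₁) (q : P), E₁ (ι a * q) = ι a * E₁ q ∧ E₁ (q * ι a) = E₁ q * ι a) ∧
      (∀ q : P, E₁ (star q) = star (E₁ q)) ∧
      (∀ q : P, trP (E₁ q) = trP q) ∧
      -- (c): {d·b·p} is a Pimsner–Popa basis for P over M₁ relative to E₁ ...
      (∀ q : P, q = ∑ b ∈ B, ((d : ℂ) • (ι b * p)) * E₁ (star ((d : ℂ) • (ι b * p)) * q)) ∧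
      -- ... with Watatani index d²
      (∑ b ∈ B, ((d : ℂ) • (ι b * p)) * star ((d : ℂ) • (ι b * p)) = ((d : ℂ) ^ 2) • (1 : P)) :=
  basic_construction_strongly_Markov_general M₁ M₀ tr htr_faithful E hE_mem hE_fix B hB d hd hBsum P
    ι p hp_star hp_idem hpwp hspan trP htrP_ext htrP_p
end
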